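/- Let V ⊆ X be an open σ-invariant set, let f_1, …, f_n, g_1, …, g_n ∈ C_c(U), and assume that for some index i either f_i ∈ C_0(V) or g_i ∈ C_0(V). Define h_0 = 1 (the constant function) and, for 1 ≤ j ≤ n, h_j = L(conj(f_j)·h_{j-1}·g_j). Then h_n ∈ C_0(V). -/

import Mathlib

/-- `σ : U → X` is a local homeomorphism. -/
def IsLocalHomeo {X : Type*} [TopologicalSpace X] (σ : X → X) (U : Set X) : Prop :=
  ∀ x ∈ U, ∃ W : Set X, x ∈ W ∧ W ⊆ U ∧ IsOpen W ∧ IsOpen (σ '' W) ∧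
    Set.InjOn σ W ∧ ContinuousOn σ W ∧ ∀ V : Set X, V ⊆ W → IsOpen V → IsOpen (σ '' V)

/-- `f` is a continuous function on `X` with compact support contained in `U`. -/
def MemCc {X : Type*} [TopologicalSpace X] (U : Set X) (f : X → ℂ) : Prop :=
  Continuous f ∧ IsCompact (tsupport f) ∧ tsupport f ⊆ U

/-- The transfer operator: `L f x = ∑_{y ∈ U, σ y = x} f y` (a finite sum for
`f ∈ C_c(U)`; the empty sum, in particular the case `σ⁻¹(x) = ∅`, gives `0`). -/
noncomputable def Lop {X : Type*} [TopologicalSpace X] (σ : X → X) (U : Set X)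
    (f : X → ℂ) : X → ℂ :=
  fun x => ∑ᶠ y ∈ {y : X | y ∈ U ∧ σ y = x}, f y
/-- `f` is continuous on `X` and vanishes at every point of `X \ V`. -/
def MemC0 {X : Type*} [TopologicalSpace X] (V : Set X) (f : X → ℂ) : Prop :=
  Continuous f ∧ ∀ x ∉ V, f x = 0

/-! A function `F ∈ C_c(U)` is cut by a partition of unity into pieces supported in the sources
of finitely many charts `e` of `σ`. For such a piece, `L F` equals `F ∘ e.symm` on the target of
`e` and vanishes off the compact set `e '' tsupport F`, so it is continuous; `L` is additive on
`C_c(U)`, hence `L F` is continuous and all `h_k` are continuous by induction. Since `V` is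
`σ`-invariant, every `σ`-preimage in `U` of a point outside `V` lies outside `V`, so `L` preserves
vanishing off `V`: the factor `f_i` or `g_i` makes `h_{i+1}` vanish off `V`, and this propagates
up to `h_n`. -/

open Set Function

section

variable {X : Type*} [TopologicalSpace X] {U V : Set X} {σ : X → X} {F G : X → ℂ}

lemma IsLocalHomeo.exists_openPartialHomeomorph (hσ : IsLocalHomeo σ U) {x : X} (hx : x ∈ U) :
    ∃ e : OpenPartialHomeomorph X X, x ∈ e.source ∧ e.source ⊆ U ∧ EqOn σ e e.source := by
  obtain ⟨W, hxW, hWU, hW, -, hinj, hcont, hopen⟩ := hσ x hx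
  have : Nonempty X := ⟨x⟩
  have hopenMap : IsOpenMap (W.domRestrict σ) := fun O hO => by
    rw [domRestrict_eq, image_comp]
    exact hopen _ (Subtype.coe_image_subset W O) (hW.isOpenMap_subtype_val O hO)
  exact ⟨.ofContinuousOpenRestrict (hinj.toPartialEquiv σ W) hcont hopenMap hW, hxW, hWU,
    fun _ _ => rfl⟩

lemma IsLocalHomeo.finite_fiber_inter (hσ : IsLocalHomeo σ U) {K : Set X} (hK : IsCompact K)
    (hKU : K ⊆ U) (x : X) : ({y | y ∈ U ∧ σ y = x} ∩ K).Finite := by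
  choose! W hyW _ hW _ hinj _ _ using fun y (hy : y ∈ K) => hσ y (hKU hy)
  obtain ⟨b, hbK, hb, hKb⟩ := hK.elim_finite_subcover_image hW fun y hy => mem_biUnion hy (hyW y hy)
  refine (hb.biUnion fun z hz => Subsingleton.finite (s := {y | y ∈ U ∧ σ y = x} ∩ W z) ?_).subset
    fun y ⟨hy, hyK⟩ => ?_
  · rintro y₁ ⟨⟨-, h₁⟩, hy₁⟩ y₂ ⟨⟨-, h₂⟩, hy₂⟩
    exact hinj z (hbK hz) hy₁ hy₂ (h₁.trans h₂.symm)
  · obtain ⟨z, hz, hyz⟩ := mem_iUnion₂.mp (hKb hyK)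
    exact mem_biUnion hz ⟨hy, hyz⟩

lemma MemCc.of_support_subset (hF : MemCc U F) (hG : Continuous G) (hGF : support G ⊆ support F) :
    MemCc U G :=
  have hGF' : tsupport G ⊆ tsupport F := closure_mono hGF
  ⟨hG, hF.2.1.of_isClosed_subset (isClosed_tsupport G) hGF', hGF'.trans hF.2.2⟩

lemma MemCc.add (hF : MemCc U F) (hG : MemCc U G) : MemCc U (F + G) :=
  have hsub : tsupport (F + G) ⊆ tsupport F ∪ tsupport G :=
    closure_minimal ((support_add F G).trans (union_subset_union (subset_tsupport F)
      (subset_tsupport G))) ((isClosed_tsupport F).union (isClosed_tsupport G))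
  ⟨hF.1.add hG.1, (hF.2.1.union hG.2.1).of_isClosed_subset (isClosed_tsupport _) hsub,
    hsub.trans (union_subset hF.2.2 hG.2.2)⟩

lemma MemCc.zero : MemCc U (0 : X → ℂ) :=
  ⟨continuous_zero, by simp, by simp⟩

lemma IsLocalHomeo.finite_fiber_inter_support (hσ : IsLocalHomeo σ U) (hF : MemCc U F) (x : X) :
    ({y | y ∈ U ∧ σ y = x} ∩ support F).Finite :=
  (hσ.finite_fiber_inter hF.2.1 hF.2.2 x).subset (inter_subset_inter_right _ (subset_tsupport F))

lemma Lop_add (hσ : IsLocalHomeo σ U) (hF : MemCc U F) (hG : MemCc U G) :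
    Lop σ U (F + G) = Lop σ U F + Lop σ U G :=
  funext fun x => finsum_mem_add_distrib' (hσ.finite_fiber_inter_support hF x)
    (hσ.finite_fiber_inter_support hG x)

lemma Lop_finset_sum (hσ : IsLocalHomeo σ U) {ι : Type*} (s : Finset ι) {F : ι → X → ℂ}
    (hF : ∀ i ∈ s, MemCc U (F i)) : Lop σ U (∑ i ∈ s, F i) = ∑ i ∈ s, Lop σ U (F i) := by
  classical
  induction s using Finset.induction_on with
  | empty => funext x; simp [Lop]
  | insert a s ha ih =>
    rw [Finset.forall_mem_insert] at hF
    rw [Finset.sum_insert ha, Finset.sum_insert ha, Lop_add hσ hF.1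
      (Finset.sum_induction _ (MemCc U) (fun _ _ => MemCc.add) MemCc.zero hF.2), ih hF.2]

lemma Lop_eq_of_mem_target (e : OpenPartialHomeomorph X X) (heU : e.source ⊆ U)
    (hσe : EqOn σ e e.source) (hFe : tsupport F ⊆ e.source) {x : X} (hx : x ∈ e.target) :
    Lop σ U F x = F (e.symm x) := by
  have hmem : e.symm x ∈ {y | y ∈ U ∧ σ y = x} :=
    ⟨heU (e.map_target hx), (hσe (e.map_target hx)).trans (e.right_inv hx)⟩
  rw [Lop, finsum_mem_def, finsum_eq_single _ (e.symm x), indicator_of_mem hmem]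
  intro y hy
  by_contra hne
  obtain ⟨⟨-, hyx⟩, hFy⟩ := indicator_apply_ne_zero.mp hne
  have hys : y ∈ e.source := hFe (subset_tsupport F hFy)
  exact hy ((e.eq_symm_apply hys hx).mpr ((hσe hys).symm.trans hyx))

lemma continuous_Lop_of_tsupport_subset_source [T2Space X] (e : OpenPartialHomeomorph X X)
    (heU : e.source ⊆ U) (hσe : EqOn σ e e.source) (hF : Continuous F)
    (hK : IsCompact (tsupport F)) (hFe : tsupport F ⊆ e.source) : Continuous (Lop σ U F) := by
  have hsupp : support (Lop σ U F) ⊆ e '' tsupport F := fun x hx => by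
    obtain ⟨y, ⟨-, hyx⟩, hFy⟩ := exists_ne_zero_of_finsum_mem_ne_zero hx
    exact ⟨y, subset_tsupport F hFy, (hσe (hFe (subset_tsupport F hFy))).symm.trans hyx⟩
  have htsupp : tsupport (Lop σ U F) ⊆ e.target :=
    (closure_minimal hsupp (hK.image_of_continuousOn (e.continuousOn.mono hFe)).isClosed).trans
      ((image_mono hFe).trans e.image_source_eq_target.subset)
  refine ContinuousOn.continuous_of_tsupport_subset ?_ e.open_target htsupp
  exact (hF.comp_continuousOn e.continuousOn_symm).congr fun x hx =>
    Lop_eq_of_mem_target e heU hσe hFe hx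

lemma continuous_Lop [T2Space X] [LocallyCompactSpace X] (hσ : IsLocalHomeo σ U)
    (hF : MemCc U F) :
    Continuous (Lop σ U F) := by
  choose e he heU hσe using fun y : tsupport F => hσ.exists_openPartialHomeomorph (hF.2.2 y.2)
  obtain ⟨t, ht⟩ := hF.2.1.elim_finite_subcover (fun y => (e y).source)
    (fun y => (e y).open_source) fun y hy => mem_iUnion.2 ⟨⟨y, hy⟩, he ⟨y, hy⟩⟩
  obtain ⟨ρ, hρ, -⟩ := PartitionOfUnity.exists_isSubordinate_of_locallyFinite_t2space hF.2.1
    (fun i : t => (e i.1).source) (fun i => (e i.1).open_source) (locallyFinite_of_finite _)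
    (by simpa [iUnion_subtype] using ht)
  have hdecomp : F = ∑ i : t, fun x => ρ i x • F x := by
    funext x
    by_cases hx : x ∈ tsupport F
    · rw [Finset.sum_apply, ← Finset.sum_smul, ← finsum_eq_sum_of_fintype, ρ.sum_eq_one hx,
        one_smul]
    · simp [image_eq_zero_of_notMem_tsupport hx]
  have hpiece : ∀ i : t, MemCc U fun x => ρ i x • F x := fun i =>
    hF.of_support_subset ((ρ i).continuous.smul hF.1) (support_smul_subset_right (ρ i) F)
  rw [hdecomp, Lop_finset_sum hσ _ fun i _ => hpiece i, Finset.sum_fn]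
  exact continuous_finsetSum _ fun i _ => continuous_Lop_of_tsupport_subset_source (e i.1)
    (heU i.1) (hσe i.1) (hpiece i).1 (hpiece i).2.1
    ((tsupport_smul_subset_left _ _).trans (hρ i))

lemma MemCc.conj_mul_mul {f h g : X → ℂ} (hf : MemCc U f) (hh : Continuous h)
    (hg : Continuous g) : MemCc U fun y => starRingEnd ℂ (f y) * h y * g y :=
  hf.of_support_subset ((Complex.continuous_conj.comp hf.1).mul hh |>.mul hg)
    fun y hy hfy => hy (by simp [hfy])

lemma Lop_eq_zero_of_notMem (hVinv : σ '' (V ∩ U) ⊆ V) (hF : ∀ y ∉ V, F y = 0)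
    {x : X} (hx : x ∉ V) : Lop σ U F x = 0 :=
  finsum_mem_of_eqOn_zero fun y ⟨hyU, hyx⟩ => hF y fun hyV => hx (hVinv ⟨y, ⟨hyV, hyU⟩, hyx⟩)

end

theorem stmt_10_general {X : Type*} [TopologicalSpace X] [CompactSpace X] [T2Space X]
    (U : Set X) (σ : X → X) (hσ : IsLocalHomeo σ U)
    (V : Set X) (hVinv : σ '' (V ∩ U) ⊆ V)
    (n : ℕ) (f g : ℕ → X → ℂ)
    (hf : ∀ k < n, MemCc U (f k)) (hg : ∀ k < n, MemCc U (g k))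
    (hi : ∃ i < n, MemC0 V (f i) ∨ MemC0 V (g i))
    (hs : ℕ → X → ℂ) (hs0 : hs 0 = fun _ => 1)
    (hsk : ∀ k < n,
      hs (k + 1) = Lop σ U (fun y => (starRingEnd ℂ) (f k y) * hs k y * g k y)) :
    MemC0 V (hs n) := by
  have hcont : ∀ k ≤ n, Continuous (hs k) := by
    intro k
    induction k with
    | zero => exact fun _ => hs0 ▸ continuous_const
    | succ k ih =>
      intro hk
      rw [hsk k hk]
      exact continuous_Lop hσ ((hf k hk).conj_mul_mul (ih (Nat.le_of_succ_le hk)) (hg k hk).1)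
  obtain ⟨i, hin, hfgi⟩ := hi
  have hvanish : ∀ k, i < k → k ≤ n → ∀ x ∉ V, hs k x = 0 := by
    intro k hik
    induction k, hik using Nat.le_induction with
    | base =>
      intro _ x hx
      rw [hsk i hin]
      refine Lop_eq_zero_of_notMem hVinv (fun y hy => ?_) hx
      rcases hfgi with h | h <;> simp [h.2 y hy]
    | succ k _ ih =>
      intro hk x hx
      rw [hsk k hk]
      exact Lop_eq_zero_of_notMem hVinv (fun y hy => by simp [ih (Nat.le_of_succ_le hk) y hy]) hx
  exact ⟨hcont n le_rfl, hvanish n hin le_rfl⟩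

/-- Let `V ⊆ X` be an open σ-invariant set, `f 0, …, f (n-1), g 0, …, g (n-1) ∈ C_c(U)`,
and assume that for some index `i` either `f i ∈ C_0(V)` or `g i ∈ C_0(V)`.
Define `hs 0 = 1` and `hs (k+1) = L (conj (f k) · hs k · g k)`.  Then `hs n ∈ C_0(V)`. -/
theorem stmt_10 {X : Type*} [TopologicalSpace X] [CompactSpace X] [T2Space X]
    (U : Set X) (hU : IsOpen U) (σ : X → X) (hσ : IsLocalHomeo σ U)
    (V : Set X) (hV : IsOpen V) (hVinv : σ '' (V ∩ U) ⊆ V)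
    (n : ℕ) (f g : ℕ → X → ℂ)
    (hf : ∀ k < n, MemCc U (f k)) (hg : ∀ k < n, MemCc U (g k))
    (hi : ∃ i < n, MemC0 V (f i) ∨ MemC0 V (g i))
    (hs : ℕ → X → ℂ) (hs0 : hs 0 = fun _ => 1)
    (hsk : ∀ k < n,
      hs (k + 1) = Lop σ U (fun y => (starRingEnd ℂ) (f k y) * hs k y * g k y)) :
    MemC0 V (hs n) :=
  stmt_10_general U σ hσ V hVinv n f g hf hg hi hs hs0 hsk
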